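/- arXiv:1008.4441 — 4 statements merged into one kernel-verified Lean document; each statement's English description precedes it below -/
import Mathlib

section
/- Let U be a finite-dimensional linear subspace of a separable Hilbert space H, Π_U the orthogonal projection onto U, and X an H-valued L² random variable. Then for the level-N quadratic quantization errors, e_N(Π_U(X))² ≤ e_N(X)² ≤ E[‖X − Π_U(X)‖²] + e_N(Π_U(X))², where the right-hand inequality holds because the infimum of E[min_{a∈Γ} ‖X−a‖²] over codebooks Γ ⊂ U of size at most N equals E‖X − Π_U(X)‖² + e_N(Π_U(X))². -/
open MeasureTheory

/-- Minimal squared quadratic quantization error at level `N`, over codebooks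
constrained to lie in a given set `S ⊆ H`. -/
noncomputable def quantErrSqIn {Ω H : Type*} [MeasureSpace Ω] [NormedAddCommGroup H]
    (X : Ω → H) (N : ℕ) (S : Set H) : ℝ :=
  sInf { v | ∃ Γ : Finset H, ∃ h : Γ.Nonempty, (Γ : Set H) ⊆ S ∧ Γ.card ≤ N ∧
    v = ∫ ω, (Γ.inf' h fun a => ‖X ω - a‖ ^ 2) }

/-- Minimal squared quadratic quantization error at level `N`. -/
noncomputable def quantErrSq {Ω H : Type*} [MeasureSpace Ω] [NormedAddCommGroup H]
    (X : Ω → H) (N : ℕ) : ℝ :=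
  quantErrSqIn X N Set.univ

/-!
For a codebook `Γ ⊆ U`, Pythagoras splits `‖X - a‖²` as `‖X - Π_U X‖² + ‖Π_U X - a‖²` for every
`a ∈ Γ`, so the error of `X` over codebooks in `U` is `E‖X - Π_U X‖²` plus that of `Π_U X`.
Conversely, `Π_U` is a contraction, so replacing a codebook `Γ` by `Π_U Γ ⊆ U` does not increase
the error of `Π_U Z` compared with the error of `Z` for `Γ`. Applied to `Z = Π_U X` this shows that
codebooks in `U` are optimal for `Π_U X`, and applied to `Z = X` that `e_N(Π_U X) ≤ e_N(X)`.
-/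

section Quantization

variable {Ω E : Type*} [MeasureSpace Ω] [NormedAddCommGroup E]

def quantErrors (X : Ω → E) (N : ℕ) (S : Set E) : Set ℝ :=
  { v | ∃ Γ : Finset E, ∃ h : Γ.Nonempty, (Γ : Set E) ⊆ S ∧ Γ.card ≤ N ∧
    v = ∫ ω, (Γ.inf' h fun a => ‖X ω - a‖ ^ 2) }

lemma quantErrSqIn_eq_sInf_quantErrors (X : Ω → E) (N : ℕ) (S : Set E) :
    quantErrSqIn X N S = sInf (quantErrors X N S) := rfl

lemma bddBelow_quantErrors (X : Ω → E) (N : ℕ) (S : Set E) : BddBelow (quantErrors X N S) := by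
  refine ⟨0, ?_⟩
  rintro v ⟨Γ, h, -, -, rfl⟩
  exact integral_nonneg fun ω => Finset.le_inf' h _ fun a _ => sq_nonneg _

lemma quantErrors_nonempty (X : Ω → E) {N : ℕ} (hN : 0 < N) {S : Set E} (hS : S.Nonempty) :
    (quantErrors X N S).Nonempty := by
  obtain ⟨x, hx⟩ := hS
  exact ⟨_, {x}, Finset.singleton_nonempty x, by simpa using hx,
    (Finset.card_singleton x).trans_le hN, rfl⟩

lemma quantErrSqIn_anti (X : Ω → E) {N : ℕ} (hN : 0 < N) {S T : Set E} (hS : S.Nonempty)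
    (hST : S ⊆ T) : quantErrSqIn X N T ≤ quantErrSqIn X N S :=
  csInf_le_csInf (bddBelow_quantErrors X N T) (quantErrors_nonempty X hN hS)
    fun _ ⟨Γ, h, hΓ, hcard, hv⟩ => ⟨Γ, h, hΓ.trans hST, hcard, hv⟩

variable [IsFiniteMeasure (volume : Measure Ω)]

lemma integrable_inf'_norm_sub_sq {X : Ω → E} (hX : MemLp X 2 volume) {Γ : Finset E}
    (h : Γ.Nonempty) : Integrable (fun ω => Γ.inf' h fun a => ‖X ω - a‖ ^ 2) volume := by
  induction h using Finset.Nonempty.cons_induction with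
  | singleton a => exact (hX.sub (memLp_const a)).norm.integrable_sq
  | cons a s ha hs ih =>
    simp only [Finset.inf'_cons hs]
    exact (hX.sub (memLp_const a)).norm.integrable_sq.inf ih

lemma quantErrSqIn_comp_le [NormedSpace ℝ E] {F : Type*} [NormedAddCommGroup F]
    [NormedSpace ℝ F] (T : E →L[ℝ] F) (hT : ‖T‖ ≤ 1) {X : Ω → E} (hX : MemLp X 2 volume)
    {N : ℕ} (hN : 0 < N) {S : Set E} (hS : S.Nonempty) :
    quantErrSqIn (fun ω => T (X ω)) N (T '' S) ≤ quantErrSqIn X N S := by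
  classical
  refine le_csInf (quantErrors_nonempty X hN hS) ?_
  rintro _ ⟨Γ, h, hΓ, hcard, rfl⟩
  refine csInf_le_of_le (bddBelow_quantErrors _ N _)
    ⟨Γ.image T, h.image T, ?_, Finset.card_image_le.trans hcard, rfl⟩ ?_
  · simpa using Set.image_mono hΓ
  refine integral_mono (integrable_inf'_norm_sub_sq (T.comp_memLp' hX) _)
    (integrable_inf'_norm_sub_sq hX h) fun ω => ?_
  rw [Finset.inf'_image]
  refine Finset.inf'_mono_fun fun a _ => ?_
  have hcontract : ‖T (X ω) - T a‖ ≤ ‖X ω - a‖ := by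
    simpa [map_sub] using T.le_of_opNorm_le hT (X ω - a)
  simp only [Function.comp_apply]
  gcongr

end Quantization

section Projection

variable {Ω H : Type*} [MeasureSpace Ω] [IsFiniteMeasure (volume : Measure Ω)]
  [NormedAddCommGroup H] [InnerProductSpace ℝ H] (U : Submodule ℝ H) [U.HasOrthogonalProjection]

lemma norm_sub_sq_eq_norm_sub_starProjection_sq_add (x : H) {a : H} (ha : a ∈ U) :
    ‖x - a‖ ^ 2 = ‖x - U.starProjection x‖ ^ 2 + ‖U.starProjection x - a‖ ^ 2 := by
  have horth : inner ℝ (x - U.starProjection x) (U.starProjection x - a) = 0 :=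
    Submodule.inner_left_of_mem_orthogonal (U.sub_mem (U.starProjection_apply_mem x) ha)
      (U.sub_starProjection_mem_orthogonal x)
  calc ‖x - a‖ ^ 2 = ‖(x - U.starProjection x) + (U.starProjection x - a)‖ ^ 2 := by
        rw [sub_add_sub_cancel]
    _ = _ := by rw [norm_add_sq_real, horth]; ring

lemma integral_inf'_norm_sub_sq_of_subset {X : Ω → H} (hX : MemLp X 2 volume) {Γ : Finset H}
    (h : Γ.Nonempty) (hΓ : (Γ : Set H) ⊆ U) :
    ∫ ω, (Γ.inf' h fun a => ‖X ω - a‖ ^ 2) =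
      (∫ ω, ‖X ω - U.starProjection (X ω)‖ ^ 2) +
        ∫ ω, (Γ.inf' h fun a => ‖U.starProjection (X ω) - a‖ ^ 2) := by
  have hpointwise : ∀ ω, (Γ.inf' h fun a => ‖X ω - a‖ ^ 2) =
      ‖X ω - U.starProjection (X ω)‖ ^ 2 +
        Γ.inf' h fun a => ‖U.starProjection (X ω) - a‖ ^ 2 := by
    intro ω
    rw [← OrderIso.addLeft_apply, map_finset_inf']
    exact Finset.inf'_congr h rfl fun a ha =>
      norm_sub_sq_eq_norm_sub_starProjection_sq_add U (X ω) (hΓ ha)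
  have hY : MemLp (fun ω => U.starProjection (X ω)) 2 volume := U.starProjection.comp_memLp' hX
  rw [integral_congr_ae (ae_of_all _ hpointwise)]
  exact integral_add (hX.sub hY).norm.integrable_sq (integrable_inf'_norm_sub_sq hY h)

lemma quantErrSqIn_submodule_eq {X : Ω → H} (hX : MemLp X 2 volume) {N : ℕ} (hN : 0 < N) :
    quantErrSqIn X N U =
      (∫ ω, ‖X ω - U.starProjection (X ω)‖ ^ 2) +
        quantErrSqIn (fun ω => U.starProjection (X ω)) N U := by
  set c := ∫ ω, ‖X ω - U.starProjection (X ω)‖ ^ 2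
  have himage : quantErrors X N U =
      (c + ·) '' quantErrors (fun ω => U.starProjection (X ω)) N U := by
    ext v
    constructor
    · rintro ⟨Γ, h, hΓ, hcard, rfl⟩
      exact ⟨_, ⟨Γ, h, hΓ, hcard, rfl⟩, (integral_inf'_norm_sub_sq_of_subset U hX h hΓ).symm⟩
    · rintro ⟨w, ⟨Γ, h, hΓ, hcard, rfl⟩, rfl⟩
      exact ⟨Γ, h, hΓ, hcard, (integral_inf'_norm_sub_sq_of_subset U hX h hΓ).symm⟩
  rw [quantErrSqIn_eq_sInf_quantErrors, quantErrSqIn_eq_sInf_quantErrors, himage]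
  exact (Monotone.map_csInf_of_continuousAt (continuous_const_add c).continuousAt
    (monotone_id.const_add c) (quantErrors_nonempty _ hN ⟨0, U.zero_mem⟩)
    (bddBelow_quantErrors _ N _)).symm

lemma quantErrSqIn_starProjection_le {X : Ω → H} (hX : MemLp X 2 volume) {N : ℕ} (hN : 0 < N) :
    quantErrSqIn (fun ω => U.starProjection (X ω)) N U ≤ quantErrSq X N := by
  have hrange : Set.range U.starProjection = U := congrArg SetLike.coe U.range_starProjection
  have := quantErrSqIn_comp_le U.starProjection U.starProjection_norm_le hX hN Set.univ_nonempty
  rwa [Set.image_univ, hrange] at this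

lemma quantErrSqIn_starProjection_eq_quantErrSq {X : Ω → H} (hX : MemLp X 2 volume) {N : ℕ}
    (hN : 0 < N) :
    quantErrSqIn (fun ω => U.starProjection (X ω)) N U =
      quantErrSq (fun ω => U.starProjection (X ω)) N := by
  refine le_antisymm ?_ (quantErrSqIn_anti _ hN ⟨0, U.zero_mem⟩ (Set.subset_univ _))
  have hidem (x : H) : U.starProjection (U.starProjection x) = U.starProjection x :=
    U.starProjection_eq_self_iff.mpr (U.starProjection_apply_mem x)
  have hY : MemLp (fun ω => U.starProjection (X ω)) 2 volume := U.starProjection.comp_memLp' hX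
  simpa [hidem] using quantErrSqIn_starProjection_le U hY hN

end Projection

/-- Reduction of dimension: for a finite dimensional subspace `U` of `H`,
`e_N(Π_U X)² ≤ e_N(X)² ≤ E‖X − Π_U X‖² + e_N(Π_U X)²`, the right-hand side being
exactly the infimum of the quantization error over codebooks contained in `U`. -/
theorem stmt2
    {Ω : Type*} [MeasureSpace Ω] [IsProbabilityMeasure (volume : Measure Ω)]
    {H : Type*} [NormedAddCommGroup H] [InnerProductSpace ℝ H]
    (U : Submodule ℝ H) [FiniteDimensional ℝ U]
    (X : Ω → H) (hX : MemLp X 2 volume)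
    (N : ℕ) (hN : 0 < N) :
    quantErrSq (fun ω => (U.orthogonalProjectionOnto (X ω) : H)) N ≤ quantErrSq X N ∧
    quantErrSq X N ≤
      (∫ ω, ‖X ω - (U.orthogonalProjectionOnto (X ω) : H)‖ ^ 2)
        + quantErrSq (fun ω => (U.orthogonalProjectionOnto (X ω) : H)) N ∧
    quantErrSqIn X N (U : Set H) =
      (∫ ω, ‖X ω - (U.orthogonalProjectionOnto (X ω) : H)‖ ^ 2)
        + quantErrSq (fun ω => (U.orthogonalProjectionOnto (X ω) : H)) N := by
  simp only [Submodule.coe_orthogonalProjectionOnto_apply]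
  have hU := quantErrSqIn_submodule_eq U hX hN
  rw [quantErrSqIn_starProjection_eq_quantErrSq U hX hN] at hU
  refine ⟨?_, ?_, hU⟩
  · rw [← quantErrSqIn_starProjection_eq_quantErrSq U hX hN]
    exact quantErrSqIn_starProjection_le U hX hN
  · rw [← hU]
    exact quantErrSqIn_anti X hN ⟨0, U.zero_mem⟩ (Set.subset_univ _)
end

section
/- Karhunen–Loève system of the Brownian motion: for the standard Brownian motion (W_t)_{t∈[0,T]} with covariance function Γ(s,t) = min(s,t), the functions e_n(t) = √(2/T) sin(π(n−1/2) t/T), n ≥ 1, form an orthonormal family in L²([0,T]) and are eigenfunctions of the covariance operator (C f)(t) = ∫₀^T min(s,t) f(s) ds with eigenvalues λ_n = (T/(π(n−1/2)))². -/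
/-!
Write `ω = π (n - 1/2) / T`. All that matters about these frequencies is the boundary condition
`cos (ω T) = 0`. It forces `sin ((ω ± ω') T) = 0`, so integrating the product-to-sum formula gives
orthogonality and `∫₀ᵀ sin² (ω t) dt = T / 2`. Splitting at `s = t` gives
`∫₀ᵀ min(s, t) sin (ω s) ds = sin (ω t) / ω² - t cos (ω T) / ω`, and again the boundary term vanishes.
-/

open Real intervalIntegral

theorem integral_sin_const_mul {c : ℝ} (hc : c ≠ 0) (a b : ℝ) :
    ∫ x in a..b, sin (c * x) = (cos (c * a) - cos (c * b)) / c := by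
  rw [integral_comp_mul_left (fun x => sin x) hc, integral_sin, smul_eq_mul, inv_mul_eq_div]

theorem integral_cos_const_mul {c : ℝ} (hc : c ≠ 0) (a b : ℝ) :
    ∫ x in a..b, cos (c * x) = (sin (c * b) - sin (c * a)) / c := by
  rw [integral_comp_mul_left (fun x => cos x) hc, integral_cos, smul_eq_mul, inv_mul_eq_div]

theorem integral_sin_const_mul_sq {c : ℝ} (hc : c ≠ 0) (a b : ℝ) :
    ∫ x in a..b, sin (c * x) ^ 2
      = (sin (c * a) * cos (c * a) - sin (c * b) * cos (c * b)) / (2 * c) + (b - a) / 2 := by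
  rw [integral_comp_mul_left (fun x => sin x ^ 2) hc, integral_sin_sq, smul_eq_mul]
  field_simp
  ring

theorem integral_mul_sin_const_mul {c : ℝ} (hc : c ≠ 0) (b : ℝ) :
    ∫ x in (0 : ℝ)..b, x * sin (c * x) = sin (c * b) / c ^ 2 - b * cos (c * b) / c := by
  have hderiv : ∀ x ∈ Set.uIcc 0 b,
      HasDerivAt (fun x => sin (c * x) / c ^ 2 - x * cos (c * x) / c) (x * sin (c * x)) x := by
    intro x _
    have hlin : HasDerivAt (fun x => c * x) c x := by simpa using (hasDerivAt_id x).const_mul c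
    refine ((hlin.sin.div_const (c ^ 2)).sub
      (((hasDerivAt_id' x).mul hlin.cos).div_const c)).congr_deriv ?_
    field_simp
    ring
  rw [integral_eq_sub_of_hasDerivAt hderiv ((by fun_prop : Continuous _).intervalIntegrable _ _)]
  simp

theorem integral_sin_mul_sin_of_cos_eq_zero {a b T : ℝ} (hab : a ≠ b) (hab' : a ≠ -b)
    (ha : cos (a * T) = 0) (hb : cos (b * T) = 0) :
    ∫ t in (0 : ℝ)..T, sin (a * t) * sin (b * t) = 0 := by
  have hsub : a - b ≠ 0 := sub_ne_zero.mpr hab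
  have hadd : a + b ≠ 0 := by rwa [← sub_neg_eq_add, sub_ne_zero]
  have hprod : ∀ t, sin (a * t) * sin (b * t) = (cos ((a - b) * t) - cos ((a + b) * t)) / 2 := by
    intro t
    rw [sub_mul, add_mul, ← two_mul_sin_mul_sin]
    ring
  simp_rw [hprod]
  rw [integral_div, integral_sub ((by fun_prop : Continuous _).intervalIntegrable _ _)
    ((by fun_prop : Continuous _).intervalIntegrable _ _), integral_cos_const_mul hsub,
    integral_cos_const_mul hadd, sub_mul, add_mul, sin_sub, sin_add, ha, hb]
  simp

theorem integral_sin_sq_of_cos_eq_zero {a T : ℝ} (ha0 : a ≠ 0) (ha : cos (a * T) = 0) :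
    ∫ t in (0 : ℝ)..T, sin (a * t) ^ 2 = T / 2 := by
  rw [integral_sin_const_mul_sq ha0, ha]
  simp

theorem integral_min_mul_sin {a t T : ℝ} (ha : a ≠ 0) (ht : t ∈ Set.Icc 0 T) :
    ∫ s in (0 : ℝ)..T, min s t * sin (a * s) = sin (a * t) / a ^ 2 - t * cos (a * T) / a := by
  have hcont : Continuous fun s => min s t * sin (a * s) := by fun_prop
  rw [← integral_add_adjacent_intervals (b := t) (hcont.intervalIntegrable _ _)
    (hcont.intervalIntegrable _ _)]
  have hleft : ∫ s in (0 : ℝ)..t, min s t * sin (a * s) = ∫ s in (0 : ℝ)..t, s * sin (a * s) :=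
    integral_congr fun s hs => by
      rw [Set.uIcc_of_le ht.1] at hs
      simp only [min_eq_left hs.2]
  have hright : ∫ s in t..T, min s t * sin (a * s) = ∫ s in t..T, t * sin (a * s) :=
    integral_congr fun s hs => by
      rw [Set.uIcc_of_le ht.2] at hs
      simp only [min_eq_right hs.1]
  rw [hleft, hright, integral_const_mul, integral_mul_sin_const_mul ha, integral_sin_const_mul ha]
  field_simp
  ring

theorem cos_pi_mul_nat_sub_half (n : ℕ) : cos (π * ((n : ℝ) - 1 / 2)) = 0 :=
  cos_eq_zero_iff.mpr ⟨(n : ℤ) - 1, by push_cast; ring⟩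

/-- Karhunen–Loève system of the Brownian motion: the functions
`e_n(t) = √(2/T) sin(π(n−1/2)t/T)` are orthonormal in `L²([0,T])` and are
eigenfunctions of the covariance operator `f ↦ ∫₀ᵀ min(s,t) f(s) ds` with
eigenvalues `λ_n = (T/(π(n−1/2)))²`. -/
theorem stmt10 (T : ℝ) (hT : 0 < T) :
    (∀ n m : ℕ, 1 ≤ n → 1 ≤ m →
      (∫ t in (0:ℝ)..T,
          (Real.sqrt (2 / T) * Real.sin (π * ((n : ℝ) - 1 / 2) * t / T)) *
          (Real.sqrt (2 / T) * Real.sin (π * ((m : ℝ) - 1 / 2) * t / T)))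
        = if n = m then 1 else 0) ∧
    (∀ n : ℕ, 1 ≤ n → ∀ t ∈ Set.Icc (0 : ℝ) T,
      (∫ s in (0:ℝ)..T,
          min s t * (Real.sqrt (2 / T) * Real.sin (π * ((n : ℝ) - 1 / 2) * s / T)))
        = (T / (π * ((n : ℝ) - 1 / 2))) ^ 2
            * (Real.sqrt (2 / T) * Real.sin (π * ((n : ℝ) - 1 / 2) * t / T))) := by
  set ω : ℕ → ℝ := fun n => π * ((n : ℝ) - 1 / 2) / T with hω
  have hmul (n : ℕ) (t : ℝ) : π * ((n : ℝ) - 1 / 2) * t / T = ω n * t := by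
    simp only [hω]; ring
  have hpos {n : ℕ} (hn : 1 ≤ n) : 0 < ω n := by
    have : (1 : ℝ) ≤ n := by exact_mod_cast hn
    exact div_pos (mul_pos pi_pos (by linarith)) hT
  have hcos (n : ℕ) : cos (ω n * T) = 0 := by
    rw [div_mul_cancel₀ _ hT.ne', cos_pi_mul_nat_sub_half]
  clear_value ω
  have hsqrt : √(2 / T) * √(2 / T) = 2 / T := mul_self_sqrt (by positivity)
  refine ⟨fun n m hn hm => ?_, fun n hn t ht => ?_⟩
  · simp_rw [hmul, mul_mul_mul_comm _ (sin _), hsqrt, integral_const_mul]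
    split_ifs with hnm
    · subst hnm
      simp_rw [← sq, integral_sin_sq_of_cos_eq_zero (hpos hn).ne' (hcos n)]
      field_simp
    · have hne : ω n ≠ ω m := fun h => hnm (by simpa [hω, pi_ne_zero, hT.ne'] using h)
      rw [integral_sin_mul_sin_of_cos_eq_zero hne (by linarith [hpos hn, hpos hm]) (hcos n) (hcos m),
        mul_zero]
  · simp_rw [hmul, mul_left_comm (min _ t), integral_const_mul,
      integral_min_mul_sin (hpos hn).ne' ht, hcos, mul_zero, zero_div, sub_zero]
    have : T / (π * ((n : ℝ) - 1 / 2)) = (ω n)⁻¹ := by simp only [hω, inv_div]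
    rw [this]
    ring
end

section
/- ODE characterization of the OU covariance operator: let T^{OU} f(t) = ∫₀^t (σ²/(2θ)) e^{θ(s−t)} f(s) ds + ∫_t^T (σ²/(2θ)) e^{θ(t−s)} f(s) ds + ∫₀^T (σ_0² − σ²/(2θ)) e^{−θ(s+t)} f(s) ds. If f ∈ C([0,T]) and g = T^{OU} f, then g ∈ C²([0,T]), g'' − θ² g = −σ² f on [0,T], and the boundary conditions σ_0² g'(0) = (σ² − θσ_0²) g(0) and g'(T) = −θ g(T) hold. Conversely, if g ∈ C²([0,T]) and f = (θ²g − g'')/σ² satisfies these boundary conditions, then g = T^{OU} f. -/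
/-!
With `c = σ² / (2θ)` and `d = σ₀² - c`, splitting the exponentials gives
`T^{OU} f (t) = c e^{-θt} ∫₀ᵗ e^{θs} f + c e^{θt} ∫ₜᵀ e^{-θs} f + d e^{-θt} ∫₀ᵀ e^{-θs} f`,
so two applications of the fundamental theorem of calculus give `g'' = θ² g - 2θc f`, and the
boundary conditions are read off at `t = 0` and `t = T`.

Conversely, `e^{θs} (θ g - g')` is an antiderivative of `e^{θs} (θ² g - g'')` for either sign
of `θ`, so every integral in `T^{OU} (θ² g - g'')` is a difference of boundary values; the two
boundary conditions make the terms at `0` and `T` vanish, leaving `2θc g = σ² g`.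
-/

open Real intervalIntegral Set

lemma hasDerivAt_exp_const_mul (a t : ℝ) :
    HasDerivAt (fun x => exp (a * x)) (a * exp (a * t)) t := by
  simpa [mul_comm] using ((hasDerivAt_id t).const_mul a).exp

lemma exp_mul_mul_exp_neg_mul (θ t : ℝ) : exp (θ * t) * exp (-θ * t) = 1 := by
  rw [← exp_add, neg_mul, add_neg_cancel, exp_zero]

lemma exists_continuous_eqOn_Icc {a b : ℝ} (hab : a ≤ b) {f : ℝ → ℝ}
    (hf : ContinuousOn f (Icc a b)) : ∃ F : ℝ → ℝ, Continuous F ∧ EqOn F f (Icc a b) :=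
  ⟨IccExtend hab ((Icc a b).domRestrict f), continuous_IccExtend_iff.2 hf.domRestrict,
    fun _ hx => IccExtend_of_mem hab _ hx⟩

lemma derivWithin_eqOn_of_eqOn_of_hasDerivAt {s : Set ℝ} (hs : UniqueDiffOn ℝ s)
    {g G G' : ℝ → ℝ} (hgG : EqOn g G s) (hG : ∀ x ∈ s, HasDerivAt G (G' x) x) :
    EqOn (derivWithin g s) G' s := fun x hx => by
  rw [derivWithin_congr hgG (hgG hx)]
  exact (hG x hx).hasDerivWithinAt.derivWithin (hs x hx)

lemma ContDiffOn.hasDerivWithinAt_derivWithin_two {s : Set ℝ} (hs : UniqueDiffOn ℝ s)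
    {g : ℝ → ℝ} (hg : ContDiffOn ℝ 2 g s) :
    (∀ x ∈ s, HasDerivWithinAt g (derivWithin g s x) s x) ∧
    (∀ x ∈ s, HasDerivWithinAt (derivWithin g s) (derivWithin (derivWithin g s) s x) s x) ∧
    ContinuousOn (derivWithin (derivWithin g s) s) s := by
  have hg' : ContDiffOn ℝ 1 (derivWithin g s) s := hg.derivWithin hs (by norm_num)
  exact ⟨fun x hx => (hg.differentiableOn (by norm_num) x hx).hasDerivWithinAt,
    fun x hx => (hg'.differentiableOn one_ne_zero x hx).hasDerivWithinAt,
    (hg'.derivWithin hs (m := 0) le_rfl).continuousOn⟩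

lemma integral_exp_mul_mul_sub_deriv2 (θ : ℝ) {a b : ℝ} (hab : a ≤ b) {g g' g'' : ℝ → ℝ}
    (hg : ∀ x ∈ Icc a b, HasDerivWithinAt g (g' x) (Icc a b) x)
    (hg' : ∀ x ∈ Icc a b, HasDerivWithinAt g' (g'' x) (Icc a b) x)
    (hg'' : ContinuousOn g'' (Icc a b)) :
    ∫ s in a..b, exp (θ * s) * (θ ^ 2 * g s - g'' s)
      = exp (θ * b) * (θ * g b - g' b) - exp (θ * a) * (θ * g a - g' a) := by
  have hP : ∀ x ∈ Icc a b, HasDerivWithinAt (fun s => exp (θ * s) * (θ * g s - g' s))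
      (exp (θ * x) * (θ ^ 2 * g x - g'' x)) (Icc a b) x := fun x hx =>
    ((hasDerivAt_exp_const_mul θ x).hasDerivWithinAt.mul
      (((hg x hx).const_mul θ).fun_sub (hg' x hx))).congr_deriv (by ring)
  have hgc : ContinuousOn g (Icc a b) := fun x hx => (hg x hx).continuousWithinAt
  refine integral_eq_sub_of_hasDeriv_right_of_le hab (fun x hx => (hP x hx).continuousWithinAt)
    (fun x hx => ((hP x (Ioo_subset_Icc_self hx)).hasDerivAt
      (Icc_mem_nhds hx.1 hx.2)).hasDerivWithinAt) ?_
  exact ((continuous_exp.comp (continuous_const_mul θ)).continuousOn.mul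
    ((continuousOn_const.mul hgc).sub hg'')).intervalIntegrable_of_Icc hab

/-- `T^{OU}` with `c = σ² / (2θ)` and `d = σ₀² - σ² / (2θ)`. -/
noncomputable def ouCovOp (θ c d T : ℝ) (f : ℝ → ℝ) (t : ℝ) : ℝ :=
  (∫ s in (0:ℝ)..t, c * exp (θ * (s - t)) * f s)
    + (∫ s in t..T, c * exp (θ * (t - s)) * f s)
    + ∫ s in (0:ℝ)..T, d * exp (-θ * (s + t)) * f s

noncomputable def ouCovOpDeriv (θ c d T : ℝ) (f : ℝ → ℝ) (t : ℝ) : ℝ :=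
  θ * (c * exp (θ * t) * ∫ s in t..T, exp (-θ * s) * f s)
    - θ * (c * exp (-θ * t) * ∫ s in (0:ℝ)..t, exp (θ * s) * f s)
    - θ * (d * exp (-θ * t) * ∫ s in (0:ℝ)..T, exp (-θ * s) * f s)

section ouCovOp

variable {θ c d T : ℝ} {f : ℝ → ℝ}

lemma continuous_exp_const_mul_mul (a : ℝ) (hf : Continuous f) :
    Continuous fun s => exp (a * s) * f s := by
  fun_prop

lemma hasDerivAt_integral_exp_const_mul_mul_right (a b : ℝ) (hf : Continuous f) (t : ℝ) :
    HasDerivAt (fun t => ∫ s in b..t, exp (a * s) * f s) (exp (a * t) * f t) t :=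
  ((continuous_exp_const_mul_mul a hf).integral_hasStrictDerivAt b t).hasDerivAt

lemma hasDerivAt_integral_exp_const_mul_mul_left (a b : ℝ) (hf : Continuous f) (t : ℝ) :
    HasDerivAt (fun t => ∫ s in t..b, exp (a * s) * f s) (-(exp (a * t) * f t)) t :=
  integral_hasDerivAt_left ((continuous_exp_const_mul_mul a hf).intervalIntegrable _ _)
    ((continuous_exp_const_mul_mul a hf).stronglyMeasurableAtFilter _ _)
    (continuous_exp_const_mul_mul a hf).continuousAt

theorem ouCovOp_eq_exp_mul_integral (f : ℝ → ℝ) : ouCovOp θ c d T f = fun t =>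
    c * exp (-θ * t) * (∫ s in (0:ℝ)..t, exp (θ * s) * f s)
      + c * exp (θ * t) * (∫ s in t..T, exp (-θ * s) * f s)
      + d * exp (-θ * t) * ∫ s in (0:ℝ)..T, exp (-θ * s) * f s := by
  ext t
  have h₁ (s : ℝ) : exp (θ * (s - t)) = exp (-θ * t) * exp (θ * s) := by
    rw [← exp_add]; ring_nf
  have h₂ (s : ℝ) : exp (θ * (t - s)) = exp (θ * t) * exp (-θ * s) := by
    rw [← exp_add]; ring_nf
  have h₃ (s : ℝ) : exp (-θ * (s + t)) = exp (-θ * t) * exp (-θ * s) := by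
    rw [← exp_add]; ring_nf
  simp only [ouCovOp, h₁, h₂, h₃, ← integral_const_mul, mul_assoc]

theorem ouCovOp_congr {F : ℝ → ℝ} (hfF : EqOn f F (Icc 0 T)) {t : ℝ} (ht : t ∈ Icc 0 T) :
    ouCovOp θ c d T f t = ouCovOp θ c d T F t := by
  have h0T : (0 : ℝ) ∈ Icc 0 T := ⟨le_rfl, ht.1.trans ht.2⟩
  have hTT : T ∈ Icc 0 T := ⟨ht.1.trans ht.2, le_rfl⟩
  unfold ouCovOp
  rw [integral_congr fun s hs => congrArg _ (hfF (uIcc_subset_Icc h0T ht hs)),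
    integral_congr fun s hs => congrArg _ (hfF (uIcc_subset_Icc ht hTT hs)),
    integral_congr fun s hs => congrArg _ (hfF (uIcc_subset_Icc h0T hTT hs))]

theorem ouCovOp_div_const (f : ℝ → ℝ) (a t : ℝ) :
    ouCovOp θ c d T (fun s => f s / a) t = ouCovOp θ c d T f t / a := by
  simp only [ouCovOp, add_div, ← integral_div, mul_div_assoc]

theorem hasDerivAt_ouCovOp (hf : Continuous f) (t : ℝ) :
    HasDerivAt (ouCovOp θ c d T f) (ouCovOpDeriv θ c d T f t) t := by
  have hU := hasDerivAt_integral_exp_const_mul_mul_right θ 0 hf t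
  have hV := hasDerivAt_integral_exp_const_mul_mul_left (-θ) T hf t
  rw [ouCovOp_eq_exp_mul_integral]
  refine (((((hasDerivAt_exp_const_mul (-θ) t).const_mul c).mul hU).fun_add
    (((hasDerivAt_exp_const_mul θ t).const_mul c).mul hV)).fun_add
    (((hasDerivAt_exp_const_mul (-θ) t).const_mul d).mul_const _)).congr_deriv ?_
  rw [ouCovOpDeriv]
  ring

theorem hasDerivAt_ouCovOpDeriv (hf : Continuous f) (t : ℝ) :
    HasDerivAt (ouCovOpDeriv θ c d T f)
      (θ ^ 2 * ouCovOp θ c d T f t - 2 * θ * c * f t) t := by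
  have hU := hasDerivAt_integral_exp_const_mul_mul_right θ 0 hf t
  have hV := hasDerivAt_integral_exp_const_mul_mul_left (-θ) T hf t
  refine (((((hasDerivAt_exp_const_mul θ t).const_mul c).mul hV).const_mul θ).fun_sub
    ((((hasDerivAt_exp_const_mul (-θ) t).const_mul c).mul hU).const_mul θ) |>.fun_sub
    ((((hasDerivAt_exp_const_mul (-θ) t).const_mul d).mul_const _).const_mul θ)).congr_deriv ?_
  rw [ouCovOp_eq_exp_mul_integral]
  linear_combination (-2 * θ * c * f t) * exp_mul_mul_exp_neg_mul θ t

theorem ouCovOpDeriv_self : ouCovOpDeriv θ c d T f T = -θ * ouCovOp θ c d T f T := by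
  rw [ouCovOp_eq_exp_mul_integral, ouCovOpDeriv]
  simp only [integral_same]
  ring

theorem ouCovOpDeriv_zero :
    (c + d) * ouCovOpDeriv θ c d T f 0 = θ * (c - d) * ouCovOp θ c d T f 0 := by
  rw [ouCovOp_eq_exp_mul_integral, ouCovOpDeriv]
  simp only [integral_same, mul_zero, exp_zero]
  ring

theorem ouCovOp_solves_bvp (hT : 0 < T) {g : ℝ → ℝ} (hf : ContinuousOn f (Icc 0 T))
    (hg : EqOn g (ouCovOp θ c d T f) (Icc 0 T)) :
    (∀ t ∈ Icc 0 T, derivWithin (derivWithin g (Icc 0 T)) (Icc 0 T) t - θ ^ 2 * g t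
        = -(2 * θ * c) * f t) ∧
      (c + d) * derivWithin g (Icc 0 T) 0 = θ * (c - d) * g 0 ∧
      derivWithin g (Icc 0 T) T = -θ * g T := by
  obtain ⟨F, hF, hFf⟩ := exists_continuous_eqOn_Icc hT.le hf
  have hgF : EqOn g (ouCovOp θ c d T F) (Icc 0 T) := fun t ht =>
    (hg ht).trans (ouCovOp_congr hFf.symm ht)
  have hUD : UniqueDiffOn ℝ (Icc 0 T) := uniqueDiffOn_Icc hT
  have hg' := derivWithin_eqOn_of_eqOn_of_hasDerivAt hUD hgF
    fun t _ => hasDerivAt_ouCovOp hF t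
  have hg'' := derivWithin_eqOn_of_eqOn_of_hasDerivAt hUD hg'
    fun t _ => hasDerivAt_ouCovOpDeriv hF t
  have h0 : (0 : ℝ) ∈ Icc 0 T := ⟨le_rfl, hT.le⟩
  have hT' : T ∈ Icc 0 T := ⟨hT.le, le_rfl⟩
  refine ⟨fun t ht => ?_, ?_, ?_⟩
  · rw [hg'' ht, hgF ht, ← hFf ht]
    ring
  · rw [hg' h0, hgF h0, ouCovOpDeriv_zero]
  · rw [hg' hT', hgF hT', ouCovOpDeriv_self]

theorem ouCovOp_sub_deriv2 {g g' g'' : ℝ → ℝ}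
    (hg : ∀ x ∈ Icc 0 T, HasDerivWithinAt g (g' x) (Icc 0 T) x)
    (hg' : ∀ x ∈ Icc 0 T, HasDerivWithinAt g' (g'' x) (Icc 0 T) x)
    (hg'' : ContinuousOn g'' (Icc 0 T))
    (h0 : (c + d) * g' 0 = θ * (c - d) * g 0) (hT : g' T = -θ * g T)
    {t : ℝ} (ht : t ∈ Icc 0 T) :
    ouCovOp θ c d T (fun s => θ ^ 2 * g s - g'' s) t = 2 * θ * c * g t := by
  have hparts {a b : ℝ} (ha : 0 ≤ a) (hab : a ≤ b) (hb : b ≤ T) (θ : ℝ) :=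
    integral_exp_mul_mul_sub_deriv2 θ hab
      (fun x hx => (hg x ⟨ha.trans hx.1, hx.2.trans hb⟩).mono (Icc_subset_Icc ha hb))
      (fun x hx => (hg' x ⟨ha.trans hx.1, hx.2.trans hb⟩).mono (Icc_subset_Icc ha hb))
      (hg''.mono (Icc_subset_Icc ha hb))
  rw [ouCovOp_eq_exp_mul_integral]
  dsimp only
  rw [hparts le_rfl ht.1 ht.2 θ, ← neg_sq θ, hparts ht.1 ht.2 le_rfl (-θ),
    hparts le_rfl (ht.1.trans ht.2) le_rfl (-θ), hT]
  simp only [mul_zero, exp_zero]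
  linear_combination (2 * θ * c * g t) * exp_mul_mul_exp_neg_mul θ t + exp (-θ * t) * h0

end ouCovOp

theorem stmt15_general (θ σ σ0sq T : ℝ) (hθ : 0 < θ) (hσ : 0 < σ)
    (hT : 0 < T)
    (TOU : (ℝ → ℝ) → ℝ → ℝ)
    (hTOU : ∀ f t, TOU f t
      = (∫ s in (0:ℝ)..t, σ ^ 2 / (2 * θ) * Real.exp (θ * (s - t)) * f s)
        + (∫ s in t..T, σ ^ 2 / (2 * θ) * Real.exp (θ * (t - s)) * f s)
        + ∫ s in (0:ℝ)..T, (σ0sq - σ ^ 2 / (2 * θ)) * Real.exp (-θ * (s + t)) * f s) :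
    (∀ f : ℝ → ℝ, ContinuousOn f (Icc 0 T) →
      ∀ g : ℝ → ℝ, (∀ t ∈ Icc 0 T, g t = TOU f t) →
        (∀ t ∈ Icc 0 T,
          derivWithin (derivWithin g (Icc 0 T)) (Icc 0 T) t - θ ^ 2 * g t
            = -(σ ^ 2) * f t) ∧
        σ0sq * derivWithin g (Icc 0 T) 0 = (σ ^ 2 - θ * σ0sq) * g 0 ∧
        derivWithin g (Icc 0 T) T = -θ * g T) ∧
    (∀ g : ℝ → ℝ, ContDiffOn ℝ 2 g (Icc 0 T) →
      σ0sq * derivWithin g (Icc 0 T) 0 = (σ ^ 2 - θ * σ0sq) * g 0 →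
      derivWithin g (Icc 0 T) T = -θ * g T →
      ∀ t ∈ Icc 0 T,
        g t = TOU (fun s =>
          (θ ^ 2 * g s - derivWithin (derivWithin g (Icc 0 T)) (Icc 0 T) s) / σ ^ 2) t) := by
  obtain rfl : TOU = ouCovOp θ (σ ^ 2 / (2 * θ)) (σ0sq - σ ^ 2 / (2 * θ)) T :=
    funext fun f => funext (hTOU f)
  have hc : 2 * θ * (σ ^ 2 / (2 * θ)) = σ ^ 2 := by field_simp
  have hcd : σ ^ 2 / (2 * θ) + (σ0sq - σ ^ 2 / (2 * θ)) = σ0sq := by ring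
  have hθcd : θ * (σ ^ 2 / (2 * θ) - (σ0sq - σ ^ 2 / (2 * θ))) = σ ^ 2 - θ * σ0sq := by
    field_simp
    ring
  refine ⟨fun f hf g hg => ?_, fun g hg h0 hT' t ht => ?_⟩
  · obtain ⟨hode, hbc₀, hbc_T⟩ := ouCovOp_solves_bvp hT hf hg
    rw [hc] at hode
    rw [hcd, hθcd] at hbc₀
    exact ⟨hode, hbc₀, hbc_T⟩
  · obtain ⟨hg₁, hg₂, hg₃⟩ := hg.hasDerivWithinAt_derivWithin_two (uniqueDiffOn_Icc hT)
    rw [ouCovOp_div_const, ouCovOp_sub_deriv2 hg₁ hg₂ hg₃ (by rwa [hcd, hθcd]) hT' ht, hc]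
    field_simp

/-- ODE characterization of the Ornstein–Uhlenbeck covariance operator `T^{OU}`:
if `f` is continuous on `[0,T]` and `g = T^{OU} f`, then
`g'' − θ²g = −σ²f` on `[0,T]` with boundary conditions
`σ₀² g'(0) = (σ² − θσ₀²) g(0)` and `g'(T) = −θ g(T)`; conversely any `C²`
function `g` satisfying these boundary conditions equals `T^{OU} f` for
`f = (θ²g − g'')/σ²`. -/
theorem stmt15 (θ σ σ0sq T : ℝ) (hθ : 0 < θ) (hσ : 0 < σ) (hσ0 : 0 ≤ σ0sq)
    (hT : 0 < T)
    (TOU : (ℝ → ℝ) → ℝ → ℝ)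
    (hTOU : ∀ f t, TOU f t
      = (∫ s in (0:ℝ)..t, σ ^ 2 / (2 * θ) * Real.exp (θ * (s - t)) * f s)
        + (∫ s in t..T, σ ^ 2 / (2 * θ) * Real.exp (θ * (t - s)) * f s)
        + ∫ s in (0:ℝ)..T, (σ0sq - σ ^ 2 / (2 * θ)) * Real.exp (-θ * (s + t)) * f s) :
    (∀ f : ℝ → ℝ, ContinuousOn f (Icc 0 T) →
      ∀ g : ℝ → ℝ, (∀ t ∈ Icc 0 T, g t = TOU f t) →
        (∀ t ∈ Icc 0 T,
          derivWithin (derivWithin g (Icc 0 T)) (Icc 0 T) t - θ ^ 2 * g t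
            = -(σ ^ 2) * f t) ∧
        σ0sq * derivWithin g (Icc 0 T) 0 = (σ ^ 2 - θ * σ0sq) * g 0 ∧
        derivWithin g (Icc 0 T) T = -θ * g T) ∧
    (∀ g : ℝ → ℝ, ContDiffOn ℝ 2 g (Icc 0 T) →
      σ0sq * derivWithin g (Icc 0 T) 0 = (σ ^ 2 - θ * σ0sq) * g 0 →
      derivWithin g (Icc 0 T) T = -θ * g T →
      ∀ t ∈ Icc 0 T,
        g t = TOU (fun s =>
          (θ ^ 2 * g s - derivWithin (derivWithin g (Icc 0 T)) (Icc 0 T) s) / σ ^ 2) t) :=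
  stmt15_general θ σ σ0sq T hθ hσ hT TOU hTOU
end

section
/- Closed form for the regression coefficients with uniform time steps: in the setting of the previous statement with t_j = jT/n = jh, the coefficient of W_{t_j} in E[∫₀^T W_s e_i^W(s) ds | W_{t_0}, …, W_{t_n}] equals λ_i^W (2 e_i^W(t_j) − e_i^W(t_{j−1}) − e_i^W(t_{j+1}))/h for 0 < j < n, equals λ_i^W ((e_i^W)'(t_0) − (e_i^W(t_1) − e_i^W(t_0))/h) for j = 0, and equals λ_i^W ((e_i^W(t_n) − e_i^W(t_{n−1}))/h − (e_i^W)'(t_n)) for j = n, where λ_i^W = (T/(π(i−1/2)))². -/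
/-!
Since `(e_i^W)'' = -e_i^W / λ_i^W`, each regression coefficient, an integral of `e_i^W` against
a hat function, is `-λ_i^W` times the integral of `(e_i^W)''` against it. Integrating by parts
twice against a linear weight leaves only boundary terms: the difference quotient of `e_i^W` on
the cell and the value of `(e_i^W)'` at the endpoint where the weight is maximal. For an interior
node the two derivative terms coming from the neighbouring cells cancel.
-/

open Real intervalIntegral Set

section Taylor

variable {f f' f'' : ℝ → ℝ} {a b : ℝ}

theorem integral_upper_sub_mul_of_hasDerivAt (hf : ∀ x ∈ uIcc a b, HasDerivAt f (f' x) x)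
    (hf' : ∀ x ∈ uIcc a b, HasDerivAt f' (f'' x) x)
    (hint : IntervalIntegrable f'' MeasureTheory.volume a b) :
    ∫ x in a..b, (b - x) * f'' x = f b - f a - (b - a) * f' a := by
  have hderiv : ∀ x ∈ uIcc a b,
      HasDerivAt (fun x => (b - x) * f' x + f x) ((b - x) * f'' x) x := fun x hx =>
    ((((hasDerivAt_id' x).const_sub b).mul (hf' x hx)).add (hf x hx)).congr_deriv (by ring)
  rw [integral_eq_sub_of_hasDerivAt hderiv
    (hint.continuousOn_mul (continuous_const.sub continuous_id).continuousOn)]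
  ring

theorem integral_sub_lower_mul_of_hasDerivAt (hf : ∀ x ∈ uIcc a b, HasDerivAt f (f' x) x)
    (hf' : ∀ x ∈ uIcc a b, HasDerivAt f' (f'' x) x)
    (hint : IntervalIntegrable f'' MeasureTheory.volume a b) :
    ∫ x in a..b, (x - a) * f'' x = (b - a) * f' b - (f b - f a) := by
  have hderiv : ∀ x ∈ uIcc a b,
      HasDerivAt (fun x => (x - a) * f' x - f x) ((x - a) * f'' x) x := fun x hx =>
    ((((hasDerivAt_id' x).sub_const a).mul (hf' x hx)).sub (hf x hx)).congr_deriv (by ring)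
  rw [integral_eq_sub_of_hasDerivAt hderiv
    (hint.continuousOn_mul (continuous_id.sub continuous_const).continuousOn)]
  ring

end Taylor

section Eigenfunction

variable {e e' : ℝ → ℝ} {lam : ℝ}

theorem integral_upper_sub_mul_eigenfunction (hlam : lam ≠ 0) (he : ∀ x, HasDerivAt e (e' x) x)
    (he' : ∀ x, HasDerivAt e' (-lam⁻¹ * e x) x) (a b : ℝ) :
    ∫ x in a..b, (b - x) * e x = lam * ((b - a) * e' a - (e b - e a)) := by
  have hcont : Continuous e := continuous_iff_continuousAt.2 fun x => (he x).continuousAt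
  have key := integral_upper_sub_mul_of_hasDerivAt (fun x _ => he x) (fun x _ => he' x)
    ((continuous_const.mul hcont).intervalIntegrable a b)
  simp only [mul_left_comm _ (-lam⁻¹), integral_const_mul] at key
  field_simp at key
  linear_combination -key

theorem integral_sub_lower_mul_eigenfunction (hlam : lam ≠ 0) (he : ∀ x, HasDerivAt e (e' x) x)
    (he' : ∀ x, HasDerivAt e' (-lam⁻¹ * e x) x) (a b : ℝ) :
    ∫ x in a..b, (x - a) * e x = lam * ((e b - e a) - (b - a) * e' b) := by
  have hcont : Continuous e := continuous_iff_continuousAt.2 fun x => (he x).continuousAt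
  have key := integral_sub_lower_mul_of_hasDerivAt (fun x _ => he x) (fun x _ => he' x)
    ((continuous_const.mul hcont).intervalIntegrable a b)
  simp only [mul_left_comm _ (-lam⁻¹), integral_const_mul] at key
  field_simp at key
  linear_combination -key

theorem integral_upper_sub_div_mul_eigenfunction (hlam : lam ≠ 0)
    (he : ∀ x, HasDerivAt e (e' x) x) (he' : ∀ x, HasDerivAt e' (-lam⁻¹ * e x) x) {a b h : ℝ}
    (hab : b - a = h) (hh : h ≠ 0) :
    ∫ x in a..b, (b - x) / h * e x = lam * (e' a - (e b - e a) / h) := by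
  simp only [div_mul_eq_mul_div, integral_div, integral_upper_sub_mul_eigenfunction hlam he he', hab]
  field_simp

theorem integral_sub_lower_div_mul_eigenfunction (hlam : lam ≠ 0)
    (he : ∀ x, HasDerivAt e (e' x) x) (he' : ∀ x, HasDerivAt e' (-lam⁻¹ * e x) x) {a b h : ℝ}
    (hab : b - a = h) (hh : h ≠ 0) :
    ∫ x in a..b, (x - a) / h * e x = lam * ((e b - e a) / h - e' b) := by
  simp only [div_mul_eq_mul_div, integral_div, integral_sub_lower_mul_eigenfunction hlam he he', hab]
  field_simp

end Eigenfunction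

theorem hasDerivAt_const_mul_sin_mul (c ω x : ℝ) :
    HasDerivAt (fun x => c * sin (ω * x)) (c * ω * cos (ω * x)) x := by
  simpa [mul_comm, mul_assoc] using (((hasDerivAt_id' x).const_mul ω).sin).const_mul c

theorem hasDerivAt_const_mul_cos_mul (c ω x : ℝ) :
    HasDerivAt (fun x => c * ω * cos (ω * x)) (-ω ^ 2 * (c * sin (ω * x))) x :=
  ((((hasDerivAt_id' x).const_mul ω).cos).const_mul (c * ω)).congr_deriv (by ring)

theorem stmt19_general (T : ℝ) (hT : 0 < T) (n : ℕ) (hn : 0 < n)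
    (h : ℝ) (hh : h = T / n)
    (t : ℕ → ℝ) (ht : ∀ j, t j = (j : ℝ) * h)
    (i : ℕ)
    (e : ℝ → ℝ)
    (he : ∀ s, e s = Real.sqrt (2 / T) * Real.sin (π * ((i : ℝ) - 1 / 2) * s / T))
    (lam : ℝ) (hlam : lam = (T / (π * ((i : ℝ) - 1 / 2))) ^ 2)
    (A B : ℕ → ℝ)
    (hA : ∀ j, j < n → A j = ∫ s in (t j)..(t (j + 1)),
        ((t (j + 1) - s) / h) * e s)
    (hB : ∀ j, j < n → B j = ∫ s in (t j)..(t (j + 1)),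
        ((s - t j) / h) * e s) :
    (∀ j, 0 < j → j < n →
      A j + B (j - 1) = lam * (2 * e (t j) - e (t (j - 1)) - e (t (j + 1))) / h) ∧
    A 0 = lam * (deriv e (t 0) - (e (t 1) - e (t 0)) / h) ∧
    B (n - 1) = lam * ((e (t n) - e (t (n - 1))) / h - deriv e (t n)) := by
  have hk : (i : ℝ) - 1 / 2 ≠ 0 := by
    intro hk
    have : 2 * i = 1 := by exact_mod_cast (by linarith : (2 * i : ℝ) = 1)
    omega
  set ω := π * ((i : ℝ) - 1 / 2) / T
  set c := Real.sqrt (2 / T)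
  have he_eq : e = fun s => c * sin (ω * s) := funext fun s => by rw [he, mul_div_right_comm]
  have hlam0 : lam ≠ 0 := by
    rw [hlam]; exact pow_ne_zero _ (div_ne_zero hT.ne' (mul_ne_zero pi_ne_zero hk))
  have hde (s : ℝ) : HasDerivAt e (c * ω * cos (ω * s)) s :=
    he_eq ▸ hasDerivAt_const_mul_sin_mul c ω s
  have hde' (s : ℝ) : HasDerivAt (fun s => c * ω * cos (ω * s)) (-lam⁻¹ * e s) s := by
    rw [hlam, ← inv_pow, inv_div, he_eq]; exact hasDerivAt_const_mul_cos_mul c ω s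
  have hstep (j : ℕ) : t (j + 1) - t j = h := by rw [ht, ht]; push_cast; ring
  have hh0 : h ≠ 0 := by rw [hh]; positivity
  have hA' (j : ℕ) (hj : j < n) := (hA j hj).trans
    (integral_upper_sub_div_mul_eigenfunction hlam0 hde hde' (hstep j) hh0)
  have hB' (j : ℕ) (hj : j < n) := (hB j hj).trans
    (integral_sub_lower_div_mul_eigenfunction hlam0 hde hde' (hstep j) hh0)
  refine ⟨fun j hj0 hjn => ?_, ?_, ?_⟩
  · rw [hA' j hjn, hB' (j - 1) (by omega), Nat.sub_add_cancel hj0]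
    ring
  · rw [hA' 0 hn, (hde _).deriv, zero_add]
  · rw [hB' (n - 1) (by omega), Nat.sub_add_cancel hn, (hde _).deriv]

/-- Closed form of the Brownian-motion regression coefficients for uniform time
steps `t_j = jT/n = jh`: the coefficient of `W_{t_j}`, namely `A_j + B_{j−1}`
(resp. `A_0`, resp. `B_{n−1}` at the endpoints), equals
`λ_i (2e_i(t_j) − e_i(t_{j−1}) − e_i(t_{j+1}))/h` for `0 < j < n`,
`λ_i (e_i'(t_0) − (e_i(t_1) − e_i(t_0))/h)` for `j = 0`, and
`λ_i ((e_i(t_n) − e_i(t_{n−1}))/h − e_i'(t_n))` for `j = n`. -/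
theorem stmt19 (T : ℝ) (hT : 0 < T) (n : ℕ) (hn : 0 < n)
    (h : ℝ) (hh : h = T / n)
    (t : ℕ → ℝ) (ht : ∀ j, t j = (j : ℝ) * h)
    (i : ℕ) (hi : 1 ≤ i)
    (e : ℝ → ℝ)
    (he : ∀ s, e s = Real.sqrt (2 / T) * Real.sin (π * ((i : ℝ) - 1 / 2) * s / T))
    (lam : ℝ) (hlam : lam = (T / (π * ((i : ℝ) - 1 / 2))) ^ 2)
    (A B : ℕ → ℝ)
    (hA : ∀ j, j < n → A j = ∫ s in (t j)..(t (j + 1)),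
        ((t (j + 1) - s) / h) * e s)
    (hB : ∀ j, j < n → B j = ∫ s in (t j)..(t (j + 1)),
        ((s - t j) / h) * e s) :
    (∀ j, 0 < j → j < n →
      A j + B (j - 1) = lam * (2 * e (t j) - e (t (j - 1)) - e (t (j + 1))) / h) ∧
    A 0 = lam * (deriv e (t 0) - (e (t 1) - e (t 0)) / h) ∧
    B (n - 1) = lam * ((e (t n) - e (t (n - 1))) / h - deriv e (t n)) :=
  stmt19_general T hT n hn h hh t ht i e he lam hlam A B hA hB
end
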